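/- Let A_Γ = ⟨a_σ : σ ∈ Γ⟩ be a T-algebra and let x ∈ X(Γ). Then every finite intersection of sets from {ℕ ∖ a_{x↾(α+1)} : α+1 ≤ λ_x} is infinite, and the family of all such finite intersections is a filter base for an ultrafilter U_x on the Boolean subalgebra B_Γ of P(ℕ) generated by {a_σ : σ ∈ Γ}: for every b ∈ B_Γ, exactly one of b, ℕ ∖ b contains some finite intersection from this family. -/

import Mathlib

open Set

noncomputable section

/-- The least uncountable ordinal `ω₁`. -/
def omega1 : Ordinal := (Cardinal.aleph 1).ord

/-- `⋃_{γ ∈ F} a_γ` for a finite set `F` of indices. -/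
def unionFin (a : Ordinal → Set ℕ) (F : Finset Ordinal) : Set ℕ :=
  ⋃ γ ∈ F, a γ

/-- A sequence of subsets of `ℕ`, with indices from a (downward closed) domain `D`
of ordinals, is coherent if for all `α ≤ β` in the domain there is a finite `F ⊆ α`
with `a α ∩ a β ⊆ ⋃_{γ∈F} a γ` or `a α ⊆ a β ∪ ⋃_{γ∈F} a γ`. -/
def CoherentOn (D : Set Ordinal) (a : Ordinal → Set ℕ) : Prop :=
  ∀ α β : Ordinal, α ≤ β → β ∈ D →
    ∃ F : Finset Ordinal, (∀ γ ∈ F, γ < α) ∧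
      (a α ∩ a β ⊆ unionFin a F ∨ a α ⊆ a β ∪ unionFin a F)

/-- Properness: no `a β` is contained in a finite union of earlier terms. -/
def ProperOn (D : Set Ordinal) (a : Ordinal → Set ℕ) : Prop :=
  ∀ β ∈ D, ∀ F : Finset Ordinal, (∀ γ ∈ F, γ < β) → ¬ a β ⊆ unionFin a F

/-- `â_β = { α ≤ β : a α ∖ a β ⊆ ⋃_{γ∈F} a γ for some finite F ⊆ α }`. -/
def hatA (a : Ordinal → Set ℕ) (β : Ordinal) : Set Ordinal :=
  { α | α ≤ β ∧ ∃ F : Finset Ordinal, (∀ γ ∈ F, γ < α) ∧ a α \ a β ⊆ unionFin a F }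

/-- The topology `τ(A)` on `λ + 1 = {α : α ≤ λ}` generated by the subbase
consisting of the sets `â_β` and their complements, `β < λ`. -/
def tau (lam : Ordinal) (a : Ordinal → Set ℕ) :
    TopologicalSpace {α : Ordinal // α ≤ lam} :=
  TopologicalSpace.generateFrom
    { s | ∃ β < lam, s = {x : {α : Ordinal // α ≤ lam} | x.1 ∈ hatA a β} ∨
                     s = {x : {α : Ordinal // α ≤ lam} | x.1 ∈ hatA a β}ᶜ }

/-- The subspace `ω₁ = {α : α < ω₁}` of `(ω₁+1, τ(A))`. -/
def tauSub (a : Ordinal → Set ℕ) : TopologicalSpace {y : Ordinal // y < omega1} :=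
  TopologicalSpace.induced
    (fun y : {y : Ordinal // y < omega1} => (⟨y.1, y.2.le⟩ : {α : Ordinal // α ≤ omega1}))
    (tau omega1 a)

/-- Closed unbounded subsets of `ω₁`. -/
def IsClub' (C : Set Ordinal) : Prop :=
  C ⊆ Iio omega1 ∧
  (∀ α < omega1, ∃ β ∈ C, α ≤ β) ∧
  (∀ δ, δ < omega1 → δ ≠ 0 → (∀ α < δ, ∃ β ∈ C, α < β ∧ β < δ) → δ ∈ C)

/-- Stationary subsets of `ω₁`: sets meeting every club. -/
def IsStationary' (S : Set Ordinal) : Prop :=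
  ∀ C : Set Ordinal, IsClub' C → (S ∩ C).Nonempty

/-- The stationary covering property for a coherent sequence whose index domain is `D`:
if the sequence has length `ω₁` (i.e. `Iio ω₁ ⊆ D`), then every stationary `S ⊆ ω₁`
together with some finite `F` covers, i.e. `⋃_{γ ∈ S ∪ F} â_γ = ω₁`.  (Sequences of
length `< ω₁` have the ScP by convention.) -/
def HasScP (D : Set Ordinal) (a : Ordinal → Set ℕ) : Prop :=
  Iio omega1 ⊆ D →
    ∀ S : Set Ordinal, S ⊆ Iio omega1 → IsStationary' S →
      ∃ F : Finset Ordinal, (⋃ γ ∈ S ∪ (↑F : Set Ordinal), hatA a γ) = Iio omega1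

/-- A node of the tree `2^{≤ω₁}`: a function `val` defined on the ordinals `< len`
(with the canonical value `false` beyond `len`). -/
structure Node where
  len : Ordinal
  val : Ordinal → Bool
  canon : ∀ α, len ≤ α → val α = false

open Classical in
/-- The restriction `x ↾ β`. -/
def Node.restrict (x : Node) (β : Ordinal) : Node where
  len := β
  val := fun α => if α < β then x.val α else false
  canon := fun α h => if_neg (not_lt.2 h)

/-- `τ.Extends σ` means `σ ⊆ τ`, i.e. `τ` extends `σ`. -/
def Node.Extends (τ σ : Node) : Prop :=
  σ.len ≤ τ.len ∧ ∀ α < σ.len, τ.val α = σ.val α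

/-- Successor ordinals. -/
def IsSucc (o : Ordinal) : Prop := ∃ β, o = β + 1

open Classical in
/-- `σ†`: if `σ` has successor length `β+1`, the node agreeing with `σ` except at `β`;
otherwise `σ` itself. -/
def Node.dagger (σ : Node) : Node :=
  if h : IsSucc σ.len then
    { len := σ.len
      val := fun α => if α = Classical.choose h then !(σ.val α) else σ.val α
      canon := by
        intro α hα
        have hs := Classical.choose_spec h
        have hne : α ≠ Classical.choose h := by
          intro he
          rw [hs, he] at hα
          rw [Ordinal.add_one_eq_succ] at hα
          exact (not_le.2 (Order.lt_succ (Classical.choose h))) hα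
        show (if α = Classical.choose h then !(σ.val α) else σ.val α) = false
        rw [if_neg hne]
        exact σ.canon α hα }
  else σ

open Classical in
/-- `σ ⌢ b` : the node `σ` extended by one value `b`. -/
def Node.snoc (σ : Node) (b : Bool) : Node where
  len := σ.len + 1
  val := fun α => if α = σ.len then b else σ.val α
  canon := by
    intro α hα
    have h1 : σ.len < α := by
      have h2 : σ.len < σ.len + 1 := by
        rw [Ordinal.add_one_eq_succ]; exact Order.lt_succ σ.len
      exact lt_of_lt_of_le h2 hα
    show (if α = σ.len then b else σ.val α) = false
    rw [if_neg h1.ne']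
    exact σ.canon α h1.le

open Classical in
/-- `x ⌢ σ` : concatenation of nodes. -/
def Node.append (x σ : Node) : Node where
  len := x.len + σ.len
  val := fun α => if α < x.len then x.val α else σ.val (α - x.len)
  canon := by
    intro α hα
    have h1 : ¬ α < x.len := not_lt.2 (le_trans (le_self_add : x.len ≤ x.len + σ.len) hα)
    show (if α < x.len then x.val α else σ.val (α - x.len)) = false
    rw [if_neg h1]
    apply σ.canon
    by_contra h2
    rw [not_le] at h2
    have h3 : α ≤ x.len + (α - x.len) := Ordinal.le_add_sub α x.len
    have h4 : x.len + (α - x.len) < x.len + σ.len := (add_lt_add_iff_left x.len).2 h2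
    exact absurd hα (not_le.2 (lt_of_le_of_lt h3 h4))

/-- A subtree of `2^{<ω₁}` that is downward closed, twinned and has no maximal elements. -/
structure GoodTree (Γ : Set Node) : Prop where
  lt_omega1 : ∀ σ ∈ Γ, σ.len < omega1
  downward : ∀ σ ∈ Γ, ∀ β ≤ σ.len, σ.restrict β ∈ Γ
  twinned : ∀ σ ∈ Γ, σ.dagger ∈ Γ
  noMax : ∀ σ ∈ Γ, ∃ τ ∈ Γ, σ.len < τ.len ∧ τ.Extends σ

/-- `X(Γ)`: the maximal branches of `Γ`, i.e. the minimal elements of `2^{≤ω₁} ∖ Γ`. -/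
def XGamma (Γ : Set Node) : Set Node :=
  { x | x.len ≤ omega1 ∧ x ∉ Γ ∧ ∀ β < x.len, x.restrict β ∈ Γ }

/-- The index domain of the branch sequence `A_{Γ,x}`. -/
def branchDomain (Γ : Set Node) (x : Node) : Set Ordinal :=
  { α | α + 1 ≤ x.len ∧ x.restrict (α + 1) ∈ Γ }

/-- The branch sequence `A_{Γ,x}`, `a^x_α = a_{x ↾ (α+1)}`. -/
def branchSeq (a : Node → Set ℕ) (x : Node) : Ordinal → Set ℕ :=
  fun α => a (x.restrict (α + 1))

/-- A `𝕋`-algebra on the tree `Γ`. -/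
structure IsTAlgebra (Γ : Set Node) (a : Node → Set ℕ) : Prop where
  tree : GoodTree Γ
  empty_of_not_succ : ∀ σ ∈ Γ, ¬ IsSucc σ.len → a σ = ∅
  compl_dagger : ∀ σ ∈ Γ, IsSucc σ.len → a σ.dagger = (a σ)ᶜ
  branch_coherent : ∀ x : Node, x.len ≤ omega1 →
    CoherentOn (branchDomain Γ x) (branchSeq a x)
  branch_proper : ∀ x : Node, x.len ≤ omega1 →
    ProperOn (branchDomain Γ x) (branchSeq a x)

/-- The Boolean subalgebra of `P(ℕ)` generated by a family `G`. -/
inductive GenBool (G : Set (Set ℕ)) : Set ℕ → Prop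
  | basic (s : Set ℕ) : s ∈ G → GenBool G s
  | empty : GenBool G ∅
  | compl (s : Set ℕ) : GenBool G s → GenBool G sᶜ
  | inter (s t : Set ℕ) : GenBool G s → GenBool G t → GenBool G (s ∩ t)

/-- `B_Γ`: the Boolean subalgebra of `P(ℕ)` generated by `{a_σ : σ ∈ Γ}`. -/
def BGamma (Γ : Set Node) (a : Node → Set ℕ) : Set (Set ℕ) :=
  { b | GenBool { s | ∃ σ ∈ Γ, s = a σ } b }

/-- A finite intersection from the family `{ℕ ∖ a_{x↾(α+1)} : α + 1 ≤ λ_x}`. -/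
def finInterCompl (a : Node → Set ℕ) (x : Node) (F : Finset Ordinal) : Set ℕ :=
  ⋂ α ∈ F, (a (x.restrict (α + 1)))ᶜ

/-- The ultrafilter `U_x` on `B_Γ` generated by the finite intersections of
`{ℕ ∖ a_{x↾(α+1)} : α + 1 ≤ λ_x}`. -/
def Ux (Γ : Set Node) (a : Node → Set ℕ) (x : Node) : Set (Set ℕ) :=
  { b | b ∈ BGamma Γ a ∧
    ∃ F : Finset Ordinal, (∀ α ∈ F, α + 1 ≤ x.len) ∧ finInterCompl a x F ⊆ b }

/-- The Stone topology on `X(Γ)`, with subbasic open sets `{z : b ∈ U_z}`, `b ∈ B_Γ`. -/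
def stoneTop (Γ : Set Node) (a : Node → Set ℕ) :
    TopologicalSpace {z : Node // z ∈ XGamma Γ} :=
  TopologicalSpace.generateFrom
    { s | ∃ b ∈ BGamma Γ a, s = { z : {z : Node // z ∈ XGamma Γ} | b ∈ Ux Γ a z.1 } }

/-- An ultrafilter on a Boolean subalgebra `B` of `P(ℕ)`. -/
def IsUltrafilterOn (B U : Set (Set ℕ)) : Prop :=
  U ⊆ B ∧
  (∀ s ∈ U, ∀ t ∈ U, s ∩ t ∈ U) ∧
  (∀ s ∈ U, ∀ t ∈ B, s ⊆ t → t ∈ U) ∧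
  ∅ ∉ U ∧
  (∀ b ∈ B, Xor' (b ∈ U) (bᶜ ∈ U))

/-- The length-lexicographic (strict) order on finite binary strings. -/
def LenLexLT (σ τ : Node) : Prop :=
  σ.len < τ.len ∨ (σ.len = τ.len ∧ ∃ i < σ.len, σ.val i = false ∧ τ.val i = true ∧
    ∀ j < i, σ.val j = τ.val j)

/-- `e` is the standard length-lexicographic enumeration of `2^{<ω}`. -/
def IsStdEnum (e : ℕ → Node) : Prop :=
  (∀ k, (e k).len < Ordinal.omega0) ∧
  (∀ σ : Node, σ.len < Ordinal.omega0 → ∃ k, e k = σ) ∧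
  (∀ k l : ℕ, k < l → LenLexLT (e k) (e l))

/-- `⋃_{k<n} c^x_k` where `c^x_n = a^x_{e(n)} ∖ ⋃_{k<n} c^x_k` (recursively). -/
def cUnion (a : Node → Set ℕ) (x : Node) (eb : ℕ → Ordinal) : ℕ → Set ℕ
  | 0 => ∅
  | n + 1 => cUnion a x eb n ∪ (a (x.restrict (eb n + 1)) \ cUnion a x eb n)

/-- `c^x_n = a^x_{e(n)} ∖ ⋃_{k<n} c^x_k`. -/
def cSeq (a : Node → Set ℕ) (x : Node) (eb : ℕ → Ordinal) (n : ℕ) : Set ℕ :=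
  a (x.restrict (eb n + 1)) \ cUnion a x eb n

/-- `{x ⌢ σ : σ ∈ 2^{<ω}}`. -/
def appendSet (x : Node) : Set Node :=
  { τ | ∃ σ : Node, σ.len < Ordinal.omega0 ∧ τ = x.append σ }

/-- The defining equations of the extension `A_Γ[π,x]`:
`a_x = ∅`, `a_{x⌢(σ⌢0)} = ⋃{c^x_k : σ⌢1 ⊆ σ_{π(k)}}`, `a_{x⌢(σ⌢1)} = ℕ ∖ a_{x⌢(σ⌢0)}`. -/
def ExtEquations (e : ℕ → Node) (π : ℕ → ℕ) (a : Node → Set ℕ) (x : Node)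
    (eb : ℕ → Ordinal) (a' : Node → Set ℕ) : Prop :=
  a' x = ∅ ∧
  ∀ σ : Node, σ.len < Ordinal.omega0 →
    (a' (x.append (σ.snoc false)) =
      ⋃ k ∈ { k : ℕ | (e (π k)).Extends (σ.snoc true) }, cSeq a x eb k) ∧
    (a' (x.append (σ.snoc true)) = (a' (x.append (σ.snoc false)))ᶜ)

/-- The full tree `2^{<ω₁}`. -/
def GammaFull : Set Node := { σ | σ.len < omega1 }

theorem natLtOmega1 (n : ℕ) : (n : Ordinal) < omega1 := by
  have h1 : (n : Ordinal) < Ordinal.omega0 := Ordinal.nat_lt_omega0 n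
  have h2 : Ordinal.omega0 < omega1 := by
    rw [omega1, ← Cardinal.ord_aleph0]
    exact Cardinal.ord_lt_ord.2 (by rw [← Cardinal.aleph_zero]
                                    exact Cardinal.aleph_lt_aleph.2 zero_lt_one)
  exact h1.trans h2


/-!
The finite intersections of the sets `ℕ ∖ a_{x↾(α+1)}` generate a filter `U_x` on `ℕ`.
Since `x ∈ X(Γ)`, the length `λ_x` is a limit ordinal (a successor length would put `x` or
its twin into `Γ`), so above any finite `F` there are infinitely many indices on the branch
of `x`, and properness along that branch produces infinitely many points avoiding the
`a_{x↾(α+1)}`, `α ∈ F`, one in each of the successive new sets.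

For the ultrafilter property it suffices, by induction on the generation of `B_Γ`, to decide
a single generator `a_σ`. If `σ` is an initial segment of `x`, then `ℕ ∖ a_σ` is a generator
of `U_x`. Otherwise let `ξ` be the first place where `σ` and `x` differ; then
`x↾(ξ+1) = (σ↾(ξ+1))†`, so `a_{σ↾(ξ+1)} ∈ U_x`, and coherence of the branch of `σ` between
`ξ` and the last index of `σ` decides `a_σ` modulo finitely many sets `a_{σ↾(γ+1)} = a_{x↾(γ+1)}`,
`γ < ξ`, whose complements lie in `U_x`.
-/

namespace Node

theorem eq_of_agree {σ τ : Node} (hlen : σ.len = τ.len)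
    (h : ∀ α < σ.len, σ.val α = τ.val α) : σ = τ := by
  obtain ⟨l, v, hv⟩ := σ
  obtain ⟨l', v', hv'⟩ := τ
  dsimp only at hlen h
  subst hlen
  have : v = v' := funext fun α => by
    rcases lt_or_ge α l with hα | hα
    · exact h α hα
    · rw [hv α hα, hv' α hα]
  subst this
  rfl

@[simp]
theorem restrict_len (x : Node) (β : Ordinal) : (x.restrict β).len = β := rfl

theorem restrict_val_of_lt (x : Node) {β α : Ordinal} (h : α < β) :
    (x.restrict β).val α = x.val α := if_pos h

theorem restrict_self (x : Node) : x.restrict x.len = x :=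
  eq_of_agree rfl fun _ hα => restrict_val_of_lt x hα

theorem restrict_eq_restrict {σ τ : Node} {δ : Ordinal} (h : ∀ α < δ, σ.val α = τ.val α) :
    σ.restrict δ = τ.restrict δ :=
  eq_of_agree rfl fun α (hα : α < δ) => by
    rw [restrict_val_of_lt σ hα, restrict_val_of_lt τ hα, h α hα]

theorem dagger_spec {σ : Node} {β : Ordinal} (h : σ.len = β + 1) :
    σ.dagger.len = σ.len ∧ ∀ α, σ.dagger.val α = if α = β then !(σ.val α) else σ.val α := by
  have hs : IsSucc σ.len := ⟨β, h⟩
  have hc : Classical.choose hs = β := by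
    rw [← Order.succ_eq_succ_iff, Order.succ_eq_add_one, Order.succ_eq_add_one,
      ← Classical.choose_spec hs, h]
  unfold Node.dagger
  rw [dif_pos hs]
  exact ⟨rfl, fun α => by simp only [hc]⟩

theorem dagger_eq_of_ne_last {σ τ : Node} {β : Ordinal} (hσ : σ.len = β + 1)
    (hτ : τ.len = β + 1) (hagree : ∀ α < β, σ.val α = τ.val α) (hne : σ.val β ≠ τ.val β) :
    σ.dagger = τ := by
  obtain ⟨hlen, hval⟩ := dagger_spec hσ
  refine eq_of_agree (hlen.trans (hσ.trans hτ.symm)) fun α hα => ?_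
  rw [hval α]
  rw [hlen, hσ, Order.lt_add_one_iff] at hα
  rcases hα.lt_or_eq with hα | rfl
  · rw [if_neg hα.ne, hagree α hα]
  · rw [if_pos rfl]
    revert hne
    cases σ.val α <;> cases τ.val α <;> simp

end Node

theorem GoodTree.exists_succ {Γ : Set Node} (hΓ : GoodTree Γ) {σ : Node} (hσ : σ ∈ Γ) :
    ∃ τ ∈ Γ, τ.len = σ.len + 1 ∧ ∀ α < σ.len, τ.val α = σ.val α := by
  obtain ⟨τ, hτ, hlt, -, hext⟩ := hΓ.noMax σ hσ
  have hlt1 : σ.len < σ.len + 1 := Order.lt_add_one_iff.mpr le_rfl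
  exact ⟨τ.restrict (σ.len + 1), hΓ.downward τ hτ _ (Order.add_one_le_iff.mpr hlt), rfl,
    fun α hα => (τ.restrict_val_of_lt (hα.trans hlt1)).trans (hext α hα)⟩

theorem XGamma.isSuccPrelimit_len {Γ : Set Node} (hΓ : GoodTree Γ) {x : Node}
    (hx : x ∈ XGamma Γ) : Order.IsSuccPrelimit x.len := by
  refine Order.isSuccPrelimit_of_succ_ne fun β hβ => ?_
  rw [Order.succ_eq_add_one] at hβ
  have hβx : β < x.len := hβ ▸ Order.lt_add_one_iff.mpr le_rfl
  obtain ⟨τ, hτ, hlen, hagree⟩ := hΓ.exists_succ (hx.2.2 β hβx)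
  have hagree' : ∀ α < β, τ.val α = x.val α := fun α hα =>
    (hagree α hα).trans (x.restrict_val_of_lt hα)
  by_cases hlast : τ.val β = x.val β
  · refine hx.2.1 (Node.eq_of_agree (hlen.trans hβ) (fun α hα => ?_) ▸ hτ)
    rw [hlen, Node.restrict_len, Order.lt_add_one_iff] at hα
    rcases hα.lt_or_eq with hα | rfl
    exacts [hagree' α hα, hlast]
  · exact hx.2.1 (Node.dagger_eq_of_ne_last hlen hβ.symm hagree' hlast ▸ hΓ.twinned τ hτ)

theorem ProperOn.infinite_iInter_compl {D : Set Ordinal} {a : Ordinal → Set ℕ}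
    (hp : ProperOn D a) (F : Finset Ordinal) {f : ℕ → Ordinal} (hf : StrictMono f)
    (hfD : ∀ k, f k ∈ D) (hF : ∀ γ ∈ F, γ < f 0) : (⋂ γ ∈ F, (a γ)ᶜ).Infinite := by
  classical
  have hpick : ∀ k, ∃ m ∈ a (f k), m ∉ unionFin a (F ∪ (Finset.range k).image f) := by
    intro k
    refine not_subset.mp (hp (f k) (hfD k) _ fun γ hγ => ?_)
    rcases Finset.mem_union.mp hγ with hγ | hγ
    · exact (hF γ hγ).trans_le (hf.monotone (Nat.zero_le k))
    · obtain ⟨j, hj, rfl⟩ := Finset.mem_image.mp hγ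
      exact hf (Finset.mem_range.mp hj)
  choose m hm hmF using hpick
  simp only [unionFin, Finset.set_biUnion_union, Finset.set_biUnion_finset_image, mem_union,
    mem_iUnion, Finset.mem_range, not_or, not_exists] at hmF
  refine infinite_of_injective_forall_mem (f := m) ?_ fun k => ?_
  · exact Function.Injective.of_lt_imp_ne fun j k hjk hmjk =>
      (hmF k).2 j hjk (hmjk ▸ hm j)
  · simp only [mem_iInter, mem_compl_iff]
    exact fun γ hγ hmγ => (hmF k).1 γ hγ hmγ

theorem finInterCompl_infinite {Γ : Set Node} {a : Node → Set ℕ} (hT : IsTAlgebra Γ a)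
    {x : Node} (hx : x ∈ XGamma Γ) (F : Finset Ordinal) (hF : ∀ α ∈ F, α + 1 ≤ x.len) :
    (finInterCompl a x F).Infinite := by
  rcases F.eq_empty_or_nonempty with rfl | hne
  · simpa [finInterCompl] using infinite_univ
  set μ := F.max' hne
  have hlim := XGamma.isSuccPrelimit_len hT.tree hx
  have hμ : μ < x.len := Order.add_one_le_iff.mp (hF μ (F.max'_mem hne))
  refine (hT.branch_proper x hx.1).infinite_iInter_compl F (f := fun k => μ + ↑(k + 1))
    (fun j k hjk => (add_lt_add_iff_left μ).2 (Nat.cast_lt.2 (Nat.succ_lt_succ hjk)))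
    (fun k => ?_) (fun γ hγ => ?_)
  · have hk : μ + ↑(k + 1) + 1 < x.len := by
      simpa only [Nat.cast_add_one, add_assoc] using hlim.add_natCast_lt hμ (k + 2)
    exact ⟨hk.le, hx.2.2 _ hk⟩
  · simpa using Order.lt_add_one_iff.mpr (F.le_max' γ hγ)

/-- `U_x` as a filter on all of `ℕ`; `Ux` is its trace on `B_Γ`. -/
def branchFilter (a : Node → Set ℕ) (x : Node) : Filter ℕ where
  sets := {b | ∃ F : Finset Ordinal, (∀ α ∈ F, α + 1 ≤ x.len) ∧ finInterCompl a x F ⊆ b}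
  univ_sets := ⟨∅, by simp, subset_univ _⟩
  sets_of_superset := fun ⟨F, hF, hs⟩ hst => ⟨F, hF, hs.trans hst⟩
  inter_sets := by
    classical
    rintro s t ⟨F, hF, hs⟩ ⟨G, hG, ht⟩
    refine ⟨F ∪ G, fun α hα => (Finset.mem_union.mp hα).elim (hF α) (hG α), ?_⟩
    rw [finInterCompl, Finset.set_biInter_inter]
    exact inter_subset_inter hs ht

theorem mem_branchFilter {a : Node → Set ℕ} {x : Node} {b : Set ℕ} :
    b ∈ branchFilter a x ↔
      ∃ F : Finset Ordinal, (∀ α ∈ F, α + 1 ≤ x.len) ∧ finInterCompl a x F ⊆ b :=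
  Iff.rfl

theorem compl_mem_branchFilter (a : Node → Set ℕ) {x : Node} {α : Ordinal}
    (hα : α + 1 ≤ x.len) : (a (x.restrict (α + 1)))ᶜ ∈ branchFilter a x :=
  ⟨{α}, by simpa using hα, by simp [finInterCompl]⟩

theorem compl_unionFin_mem_branchFilter (a : Node → Set ℕ) {x : Node} {G : Finset Ordinal}
    (hG : ∀ γ ∈ G, γ + 1 ≤ x.len) : (unionFin (branchSeq a x) G)ᶜ ∈ branchFilter a x :=
  ⟨G, hG, by simp [finInterCompl, unionFin, branchSeq]⟩

theorem neBot_branchFilter {Γ : Set Node} {a : Node → Set ℕ} (hT : IsTAlgebra Γ a)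
    {x : Node} (hx : x ∈ XGamma Γ) : (branchFilter a x).NeBot :=
  Filter.forall_mem_nonempty_iff_neBot.mp fun _ ⟨F, hF, hs⟩ =>
    (finInterCompl_infinite hT hx F hF).nonempty.mono hs

theorem GenBool.mem_or_compl_mem {G : Set (Set ℕ)} (f : Filter ℕ)
    (hG : ∀ s ∈ G, s ∈ f ∨ sᶜ ∈ f) {b : Set ℕ} (hb : GenBool G b) : b ∈ f ∨ bᶜ ∈ f := by
  induction hb with
  | basic s hs => exact hG s hs
  | empty => exact Or.inr (by simp)
  | compl s _ ih => rwa [compl_compl, or_comm]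
  | inter s t _ _ ihs iht =>
    rcases ihs with hs | hs
    · rcases iht with ht | ht
      · exact Or.inl (Filter.inter_mem hs ht)
      · exact Or.inr (Filter.mem_of_superset ht (compl_subset_compl.mpr inter_subset_right))
    · exact Or.inr (Filter.mem_of_superset hs (compl_subset_compl.mpr inter_subset_left))

theorem mem_or_compl_mem_branchFilter_of_ne {Γ : Set Node} {a : Node → Set ℕ}
    (hT : IsTAlgebra Γ a) {x σ : Node} (hσ : σ ∈ Γ) {β ξ : Ordinal} (hβ : σ.len = β + 1)
    (hξσ : ξ < σ.len) (hξx : ξ < x.len) (hagree : ∀ α < ξ, σ.val α = x.val α)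
    (hne : σ.val ξ ≠ x.val ξ) :
    a σ ∈ branchFilter a x ∨ (a σ)ᶜ ∈ branchFilter a x := by
  set τ := σ.restrict (ξ + 1)
  have hξ1 : ξ + 1 ≤ σ.len := Order.add_one_le_iff.mpr hξσ
  have hτ : τ ∈ Γ := hT.tree.downward σ hσ _ hξ1
  have htwin : τ.dagger = x.restrict (ξ + 1) :=
    Node.dagger_eq_of_ne_last rfl rfl
      (fun α hα => by
        rw [σ.restrict_val_of_lt (hα.trans (Order.lt_add_one_iff.mpr le_rfl)),
          x.restrict_val_of_lt (hα.trans (Order.lt_add_one_iff.mpr le_rfl)), hagree α hα])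
      (by rwa [σ.restrict_val_of_lt (Order.lt_add_one_iff.mpr le_rfl),
          x.restrict_val_of_lt (Order.lt_add_one_iff.mpr le_rfl)])
  have hτmem : a τ ∈ branchFilter a x := by
    simpa [← htwin, hT.compl_dagger τ hτ ⟨ξ, rfl⟩] using
      compl_mem_branchFilter a (Order.add_one_le_iff.mpr hξx)
  have hβσ : β ∈ branchDomain Γ σ := ⟨hβ.ge, by rwa [← hβ, σ.restrict_self]⟩
  obtain ⟨G, hGξ, hcoh⟩ := hT.branch_coherent σ (hT.tree.lt_omega1 σ hσ).le ξ β
    (Order.lt_add_one_iff.mp (hβ ▸ hξσ)) hβσ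
  have hGmem : (unionFin (branchSeq a σ) G)ᶜ ∈ branchFilter a x := by
    have hGx : unionFin (branchSeq a σ) G = unionFin (branchSeq a x) G := by
      refine iUnion₂_congr fun γ hγ => congrArg a (Node.restrict_eq_restrict fun α hα =>
        hagree α (hα.trans_le (Order.add_one_le_iff.mpr (hGξ γ hγ))))
    rw [hGx]
    exact compl_unionFin_mem_branchFilter a fun γ hγ =>
      Order.add_one_le_iff.mpr ((hGξ γ hγ).trans hξx)
  have hσβ : branchSeq a σ β = a σ := by rw [branchSeq, ← hβ, σ.restrict_self]
  rw [hσβ] at hcoh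
  rcases hcoh with h | h
  · refine Or.inr (Filter.mem_of_superset (Filter.inter_mem hτmem hGmem) ?_)
    exact fun n ⟨hnτ, hnG⟩ hnσ => hnG (h ⟨hnτ, hnσ⟩)
  · refine Or.inl (Filter.mem_of_superset (Filter.inter_mem hτmem hGmem) ?_)
    exact fun n ⟨hnτ, hnG⟩ => (h hnτ).resolve_right hnG

theorem mem_or_compl_mem_branchFilter {Γ : Set Node} {a : Node → Set ℕ} (hT : IsTAlgebra Γ a)
    {x : Node} (hx : x ∈ XGamma Γ) {σ : Node} (hσ : σ ∈ Γ) :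
    a σ ∈ branchFilter a x ∨ (a σ)ᶜ ∈ branchFilter a x := by
  by_cases hsucc : IsSucc σ.len
  swap
  · simp [hT.empty_of_not_succ σ hσ hsucc]
  obtain ⟨β, hβ⟩ := hsucc
  by_cases hD : ∃ ξ, ξ < σ.len ∧ ξ < x.len ∧ σ.val ξ ≠ x.val ξ
  · obtain ⟨ξ, ⟨hξσ, hξx, hne⟩, hmin⟩ := wellFounded_lt.has_min _ hD
    refine mem_or_compl_mem_branchFilter_of_ne hT hσ hβ hξσ hξx (fun α hα => ?_) hne
    by_contra h
    exact hmin α ⟨hα.trans hξσ, hα.trans hξx, h⟩ hα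
  push Not at hD
  have hlen : σ.len ≤ x.len := by
    by_contra! hlt
    have hσx : σ.restrict x.len = x := Node.eq_of_agree rfl fun α (hα : α < x.len) =>
      (σ.restrict_val_of_lt hα).trans (hD α (hα.trans hlt) hα)
    exact hx.2.1 (hσx ▸ hT.tree.downward σ hσ _ hlt.le)
  have hσx : σ.restrict σ.len = x.restrict σ.len :=
    Node.restrict_eq_restrict fun α hα => hD α hα (hα.trans_le hlen)
  rw [σ.restrict_self, hβ] at hσx
  exact Or.inr (hσx ▸ compl_mem_branchFilter a (hβ ▸ hlen))

/-- For a `𝕋`-algebra `A_Γ` and `x ∈ X(Γ)`: every finite intersection from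
`{ℕ ∖ a_{x↾(α+1)} : α+1 ≤ λ_x}` is infinite, and for every `b` in the Boolean
subalgebra `B_Γ` generated by `{a_σ : σ ∈ Γ}`, exactly one of `b`, `ℕ ∖ b`
contains one of these finite intersections. -/
theorem stmt3 (Γ : Set Node) (a : Node → Set ℕ) (hT : IsTAlgebra Γ a)
    (x : Node) (hx : x ∈ XGamma Γ) :
    (∀ F : Finset Ordinal, (∀ α ∈ F, α + 1 ≤ x.len) → (finInterCompl a x F).Infinite) ∧
    (∀ b ∈ BGamma Γ a,
      Xor' (∃ F : Finset Ordinal, (∀ α ∈ F, α + 1 ≤ x.len) ∧ finInterCompl a x F ⊆ b)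
           (∃ F : Finset Ordinal, (∀ α ∈ F, α + 1 ≤ x.len) ∧ finInterCompl a x F ⊆ bᶜ)) := by
  refine ⟨finInterCompl_infinite hT hx, fun b hb => ?_⟩
  have := neBot_branchFilter hT hx
  simp only [← mem_branchFilter]
  have hgen : ∀ s ∈ {s | ∃ σ ∈ Γ, s = a σ}, s ∈ branchFilter a x ∨ sᶜ ∈ branchFilter a x := by
    rintro _ ⟨σ, hσ, rfl⟩
    exact mem_or_compl_mem_branchFilter hT hx hσ
  rcases GenBool.mem_or_compl_mem _ hgen hb with h | h
  · exact Or.inl ⟨h, Filter.compl_notMem h⟩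
  · exact Or.inr ⟨h, fun h' => Filter.compl_notMem h' h⟩

end
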